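/- arXiv:2110.09112 — 2 statements merged into one kernel-verified Lean document; each statement's English description precedes it below -/
import Mathlib

section
/- Let p ∈ ℚ[t] be monic of degree m ≥ 1 with p(0) ≠ 0, let C ∈ ℚ^{m×m} be its companion matrix, and let q = c·p ∈ ℤ[t], where c ∈ ℤ∖{0} is chosen so that q has coprime coefficients. Then the index of the additive subgroup Cℤ^m[C] in ℤ^m[C] equals |q(0)|, i.e. [ℤ^m[C] : Cℤ^m[C]] = |q(0)|. -/
open Matrix Polynomial

/-- `ℤ^m[M] = ⋃_{k≥1} (ℤ^m + Mℤ^m + ⋯ + M^{k-1}ℤ^m)`, the additive subgroup of `ℚ^m`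
generated by all vectors `M^j z` with `z ∈ ℤ^m`. -/
def intSpan (m : ℕ) (M : Matrix (Fin m) (Fin m) ℚ) : AddSubgroup (Fin m → ℚ) :=
  AddSubgroup.closure {x | ∃ (j : ℕ) (z : Fin m → ℤ), x = (M ^ j) *ᵥ fun i => (z i : ℚ)}

/-- The index `[ℤ^m[M] : Mℤ^m[M]]` of the additive subgroup `Mℤ^m[M]` in `ℤ^m[M]`. -/
noncomputable def idx (m : ℕ) (M : Matrix (Fin m) (Fin m) ℚ) : ℕ :=
  ((intSpan m M).map (Matrix.mulVecLin M).toAddMonoidHom).relIndex (intSpan m M)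

/-- The companion matrix of a monic polynomial `p` of degree `m`:
`C e_j = e_{j+1}` for `1 ≤ j < m` and `C e_m = -(a₀ e₁ + ⋯ + a_{m-1} e_m)`. -/
def companion (m : ℕ) (p : Polynomial ℚ) : Matrix (Fin m) (Fin m) ℚ :=
  Matrix.of fun i j =>
    if (j : ℕ) + 1 = m then -p.coeff i else if (i : ℕ) = (j : ℕ) + 1 then 1 else 0

/-!
Let `e₀` be the first standard basis vector and `Φ : ℤ[X] →+ ℚ^m`, `h ↦ h(C) e₀`.
Since `C^k e₀ = e_k` for `k < m`, the image of `Φ` is `ℤ^m[C]`, and `Φ (X h) = C (Φ h)`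
gives `Cℤ^m[C] = Φ((X))`. Over `ℚ` the annihilator of the cyclic vector `e₀` is `(p)`,
so Gauss's lemma gives `ker Φ = (q)`. Hence `[ℤ^m[C] : Cℤ^m[C]] = [ℤ[X] : (X, q)]`,
and evaluation at `0` identifies `ℤ[X] ⧸ (X, q)` with `ℤ ⧸ q(0)ℤ`.
-/

section Companion

variable {n : ℕ} (p : ℚ[X])

theorem companion_mulVec_single_castSucc (j : Fin n) :
    companion (n + 1) p *ᵥ Pi.single j.castSucc 1 = Pi.single j.succ 1 := by
  ext i
  simp [companion, Pi.single_apply, Fin.ext_iff, j.isLt.ne]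

theorem companion_mulVec_single_last :
    companion (n + 1) p *ᵥ Pi.single (Fin.last n) 1 = fun i : Fin (n + 1) => -p.coeff i := by
  ext i
  simp [companion]

theorem companion_pow_mulVec_single_zero (k : Fin (n + 1)) :
    companion (n + 1) p ^ (k : ℕ) *ᵥ Pi.single 0 1 = Pi.single k 1 := by
  induction k using Fin.induction with
  | zero => rw [Fin.val_zero, pow_zero, one_mulVec]
  | succ j ih =>
    rw [Fin.val_succ, pow_succ', ← mulVec_mulVec, ← Fin.val_castSucc, ih,
      companion_mulVec_single_castSucc]

theorem sum_smul_companion_pow_mulVec_single_zero (a : Fin (n + 1) → ℚ) :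
    (∑ i : Fin (n + 1), a i • companion (n + 1) p ^ (i : ℕ)) *ᵥ Pi.single 0 1 = a := by
  simp only [sum_mulVec, smul_mulVec, companion_pow_mulVec_single_zero]
  ext i
  simp [Pi.single_apply]

theorem aeval_companion_mulVec_single_zero_of_natDegree_lt {g : ℚ[X]}
    (hg : g.natDegree < n + 1) :
    aeval (companion (n + 1) p) g *ᵥ Pi.single 0 1 = fun i : Fin (n + 1) => g.coeff i := by
  rw [aeval_eq_sum_range' hg, ← Fin.sum_univ_eq_sum_range (fun i => g.coeff i • _),
    sum_smul_companion_pow_mulVec_single_zero]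

variable {p}

theorem aeval_companion_self_mulVec_single_zero (hp : p.Monic) (hpd : p.natDegree = n + 1) :
    aeval (companion (n + 1) p) p *ᵥ Pi.single 0 1 = 0 := by
  have hlt : p.natDegree < n + 1 + 1 := by omega
  have hlead : p.coeff (n + 1) = 1 := hpd ▸ hp.coeff_natDegree
  have hlast := companion_pow_mulVec_single_zero p (Fin.last n)
  rw [Fin.val_last] at hlast
  rw [aeval_eq_sum_range' hlt, Finset.sum_range_succ, hlead, one_smul,
    ← Fin.sum_univ_eq_sum_range (fun i => p.coeff i • _), add_mulVec,
    sum_smul_companion_pow_mulVec_single_zero, pow_succ', ← mulVec_mulVec,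
    hlast, companion_mulVec_single_last]
  ext i
  simp

theorem aeval_companion_mulVec_single_zero_eq_zero_iff (hp : p.Monic)
    (hpd : p.natDegree = n + 1) (g : ℚ[X]) :
    aeval (companion (n + 1) p) g *ᵥ Pi.single 0 1 = 0 ↔ p ∣ g := by
  have hmul (u : ℚ[X]) : aeval (companion (n + 1) p) (p * u) *ᵥ Pi.single 0 1 = 0 := by
    rw [mul_comm, map_mul, ← mulVec_mulVec, aeval_companion_self_mulVec_single_zero hp hpd,
      mulVec_zero]
  refine ⟨fun hg => ?_, fun ⟨u, hu⟩ => hu ▸ hmul u⟩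
  have hp1 : p ≠ 1 := fun h => by simp [h] at hpd
  have hdeg : (g %ₘ p).natDegree < n + 1 := hpd ▸ natDegree_modByMonic_lt g hp hp1
  rw [← modByMonic_add_div g p, map_add, add_mulVec, hmul, add_zero,
    aeval_companion_mulVec_single_zero_of_natDegree_lt p hdeg] at hg
  rw [← modByMonic_eq_zero_iff_dvd hp]
  ext k
  rcases lt_or_ge k (n + 1) with hk | hk
  · exact congrFun hg ⟨k, hk⟩
  · exact coeff_eq_zero_of_natDegree_lt (hdeg.trans_le hk)

end Companion

section IntegerPolynomialOrbit

variable {ι : Type*} [Fintype ι] [DecidableEq ι]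

noncomputable def aevalMulVec (M : Matrix ι ι ℚ) (v : ι → ℚ) : ℤ[X] →+ (ι → ℚ) :=
  AddMonoidHom.mk' (fun h => aeval M h *ᵥ v) fun g h => by rw [map_add, add_mulVec]

theorem aevalMulVec_apply (M : Matrix ι ι ℚ) (v : ι → ℚ) (h : ℤ[X]) :
    aevalMulVec M v h = aeval M h *ᵥ v :=
  rfl

theorem aevalMulVec_X_mul (M : Matrix ι ι ℚ) (v : ι → ℚ) (h : ℤ[X]) :
    aevalMulVec M v (X * h) = M *ᵥ aevalMulVec M v h := by
  rw [aevalMulVec_apply, aevalMulVec_apply, map_mul, aeval_X, mulVec_mulVec]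

theorem aevalMulVec_monomial (M : Matrix ι ι ℚ) (v : ι → ℚ) (k : ℕ) (a : ℤ) :
    aevalMulVec M v (monomial k a) = M ^ k *ᵥ (a • v) := by
  rw [aevalMulVec_apply, aeval_monomial, Algebra.algebraMap_eq_smul_one, smul_mul_assoc, one_mul,
    smul_mulVec, mulVec_smul]

theorem range_aevalMulVec_le_intSpan {m : ℕ} (M : Matrix (Fin m) (Fin m) ℚ)
    (z : Fin m → ℤ) :
    (aevalMulVec M fun i => (z i : ℚ)).range ≤ intSpan m M := by
  rintro _ ⟨h, rfl⟩
  induction h using Polynomial.induction_on' with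
  | add f g hf hg => rw [map_add]; exact add_mem hf hg
  | monomial k a =>
    refine AddSubgroup.subset_closure ⟨k, a • z, ?_⟩
    rw [aevalMulVec_monomial]
    congr 1
    ext i
    simp

theorem intSpan_companion_le_range {n : ℕ} (p : ℚ[X]) :
    intSpan (n + 1) (companion (n + 1) p) ≤
      (aevalMulVec (companion (n + 1) p) (Pi.single 0 1)).range := by
  refine (AddSubgroup.closure_le _).2 ?_
  rintro _ ⟨j, z, rfl⟩
  have hz : (fun i => (z i : ℚ)) =
      ∑ i : Fin (n + 1), z i • (companion (n + 1) p ^ (i : ℕ) *ᵥ Pi.single 0 1) := by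
    simp only [companion_pow_mulVec_single_zero]
    ext k
    simp [Pi.single_apply]
  rw [hz, mulVec_sum]
  refine sum_mem fun i _ => ?_
  rw [mulVec_smul, mulVec_mulVec, ← pow_add]
  exact zsmul_mem
    (AddMonoidHom.mem_range.2 ⟨X ^ (j + i), by rw [aevalMulVec_apply, aeval_X_pow]⟩) _

theorem intSpan_companion_eq_range {n : ℕ} (p : ℚ[X]) :
    intSpan (n + 1) (companion (n + 1) p) =
      (aevalMulVec (companion (n + 1) p) (Pi.single 0 1)).range := by
  refine le_antisymm (intSpan_companion_le_range p) ?_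
  have hv : (Pi.single 0 1 : Fin (n + 1) → ℚ) =
      fun i => ((Pi.single 0 1 : Fin (n + 1) → ℤ) i : ℚ) := by
    ext i
    simp [Pi.single_apply]
  exact hv ▸ range_aevalMulVec_le_intSpan (companion (n + 1) p) (Pi.single 0 1)

theorem aevalMulVec_companion_eq_zero_iff {n : ℕ} {p : ℚ[X]} (hp : p.Monic)
    (hpd : p.natDegree = n + 1) {q : ℤ[X]} {c : ℤ} (hc : c ≠ 0) (hq : q.IsPrimitive)
    (hqc : q.map (Int.castRingHom ℚ) = C (c : ℚ) * p) (h : ℤ[X]) :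
    aevalMulVec (companion (n + 1) p) (Pi.single 0 1) h = 0 ↔ q ∣ h := by
  have hcu : IsUnit (C (c : ℚ)) := isUnit_C.2 (Ne.isUnit (Int.cast_ne_zero.2 hc))
  rw [aevalMulVec_apply, ← aeval_map_algebraMap ℚ,
    aeval_companion_mulVec_single_zero_eq_zero_iff hp hpd,
    hq.dvd_iff_fraction_map_dvd_fraction_map ℚ, algebraMap_int_eq, hqc, hcu.mul_left_dvd]

end IntegerPolynomialOrbit

theorem index_span_X_pair (q : ℤ[X]) :
    (Ideal.span {X, q}).toAddSubgroup.index = (q.eval 0).natAbs := by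
  have hsurj : Function.Surjective (evalRingHom (0 : ℤ)) := fun a => ⟨C a, eval_C⟩
  have hmap : (Ideal.span {X, q}).map (evalRingHom 0) = Ideal.span {q.eval 0} := by
    rw [Ideal.map_span, Set.image_pair, coe_evalRingHom, eval_X, Ideal.span_insert_zero]
  have hcomap : Ideal.span {X, q} = (Ideal.span {q.eval 0}).comap (evalRingHom 0) := by
    rw [← hmap, Ideal.comap_map_of_surjective _ hsurj, ← RingHom.ker_eq_comap_bot,
      ker_evalRingHom, map_zero, sub_zero, left_eq_sup]
    exact Ideal.span_mono (Set.singleton_subset_iff.2 (Set.mem_insert _ _))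
  rw [hcomap]
  refine ((Ideal.span {q.eval 0}).toAddSubgroup.index_comap_of_surjective
    (f := (evalRingHom 0).toAddMonoidHom) hsurj).trans ?_
  rw [Ideal.span_singleton_toAddSubgroup_eq_zmultiples, Int.index_zmultiples]

theorem relIndex_map_range_eq_natAbs_eval_zero {V : Type*} [AddCommGroup V] (Φ : ℤ[X] →+ V)
    (A : V →+ V) (hA : ∀ h, Φ (X * h) = A (Φ h)) (q : ℤ[X])
    (hker : ∀ h, Φ h = 0 ↔ q ∣ h) :
    (Φ.range.map A).relIndex Φ.range = (q.eval 0).natAbs := by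
  have hmap : Φ.range.map A = (Ideal.span {X}).toAddSubgroup.map Φ := by
    ext v
    simp [Ideal.mem_span_singleton, dvd_def, hA]
  have hkerΦ : Φ.ker = (Ideal.span {q}).toAddSubgroup := by
    ext h
    simp [Ideal.mem_span_singleton, hker]
  rw [hmap, Φ.range_eq_map, AddSubgroup.relIndex_map_map, top_sup_eq,
    AddSubgroup.relIndex_top_right, hkerΦ, ← Submodule.sup_toAddSubgroup, ← Ideal.span_insert,
    index_span_X_pair]

theorem stmt3_general (m : ℕ) (hm : 1 ≤ m) (p : Polynomial ℚ) (hp : p.Monic) (hpd : p.natDegree = m)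
    (q : Polynomial ℤ) (c : ℤ) (hc : c ≠ 0) (hq : q.IsPrimitive)
    (hqc : q.map (Int.castRingHom ℚ) = Polynomial.C (c : ℚ) * p) :
    idx m (companion m p) = (q.eval 0).natAbs := by
  obtain ⟨n, rfl⟩ := Nat.exists_eq_add_of_le' hm
  rw [idx, intSpan_companion_eq_range]
  exact relIndex_map_range_eq_natAbs_eval_zero _ _ (aevalMulVec_X_mul _ _) q
    (aevalMulVec_companion_eq_zero_iff hp hpd hc hq hqc)

theorem stmt3 (m : ℕ) (hm : 1 ≤ m) (p : Polynomial ℚ) (hp : p.Monic) (hpd : p.natDegree = m)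
    (hp0 : p.eval 0 ≠ 0)
    (q : Polynomial ℤ) (c : ℤ) (hc : c ≠ 0) (hq : q.IsPrimitive)
    (hqc : q.map (Int.castRingHom ℚ) = Polynomial.C (c : ℚ) * p) :
    idx m (companion m p) = (q.eval 0).natAbs :=
  stmt3_general m hm p hp hpd q c hc hq hqc
end

section
/- Let q ∈ ℤ[t] have degree m ≥ 1 and coprime coefficients, let p = q / lc(q) ∈ ℚ[t] be the associated monic polynomial (lc(q) the leading coefficient), let C ∈ ℚ^{m×m} be the companion matrix of p, and let e₁ be the first standard basis vector of ℚ^m. Then every v ∈ ℤ^m[C] can be written in exactly one way as v = Σ_{j≥0} b_j C^j e₁, where (b_j)_{j≥0} is a finitely supported sequence of integers such that b_j ∈ {0, 1, …, |lc(q)| − 1} for every j ≥ m. -/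
open Matrix Polynomial

/-!
Evaluating `f ↦ f(C) e₁` maps `ℤ[t]` onto `ℤ^m[C]`. Since `C^j e₁ = e_{j+1}` for `j < m`, the
vector `e₁` is cyclic for `C` and `p(C) e₁ = 0`, so over `ℚ` the kernel of this map is `(p)`; by
Gauss's lemma its kernel on `ℤ[t]` is `q ℤ[t]`. It remains to pick in each class of `ℤ[t] / (q)`
the representative whose coefficients of degree `≥ m` are digits in `[0, |lc q|)`. It is found
from the top down, by division with remainder by `lc q` and subtraction of multiples `t^k q`; it
is unique because a nonzero multiple of `q` has a leading coefficient of absolute value at least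
`|lc q|`, in degree `≥ m`.
-/

theorem Matrix.aeval_mulVec_eq_sum {R S n : Type*} [CommSemiring R] [CommSemiring S]
    [Algebra R S] [Fintype n] [DecidableEq n] (M : Matrix n n S) (x : n → S) (f : R[X]) :
    aeval M f *ᵥ x = f.sum fun j a => a • (M ^ j *ᵥ x) := by
  simp only [aeval_def, eval₂_eq_sum, Polynomial.sum, sum_mulVec, Algebra.algebraMap_eq_smul_one,
    smul_mul_assoc, one_mul, smul_mulVec]

theorem Matrix.aeval_ofFinsupp_mulVec {n S : Type*} [CommRing S] [Fintype n] [DecidableEq n]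
    (M : Matrix n n S) (x : n → S) (b : ℕ →₀ ℤ) :
    aeval M (⟨.ofCoeff b⟩ : ℤ[X]) *ᵥ x = b.sum fun j bj => (bj : S) • (M ^ j *ᵥ x) := by
  simp only [aeval_mulVec_eq_sum, Polynomial.sum, support_ofFinsupp, coeff_ofFinsupp,
    Int.cast_smul_eq_zsmul]
  rfl

section Companion

variable {m : ℕ} {p : ℚ[X]}

theorem companion_mulVec_single_of_lt (i : Fin m) (hi : (i : ℕ) + 1 < m) :
    companion m p *ᵥ Pi.single i 1 = Pi.single ⟨i + 1, hi⟩ 1 := by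
  ext k
  simp [companion, hi.ne, Pi.single_apply, Fin.ext_iff]

theorem companion_mulVec_single_of_eq (i : Fin m) (hi : (i : ℕ) + 1 = m) :
    companion m p *ᵥ Pi.single i 1 = -fun k : Fin m => p.coeff k := by
  ext k
  simp [companion, hi]

theorem companion_pow_mulVec_single_zero_s4 (hm : 1 ≤ m) {j : ℕ} (hj : j < m) :
    companion m p ^ j *ᵥ Pi.single ⟨0, hm⟩ 1 = Pi.single ⟨j, hj⟩ 1 := by
  induction j with
  | zero => rw [pow_zero, one_mulVec]
  | succ j ih =>
    rw [pow_succ', ← mulVec_mulVec, ih (by omega), companion_mulVec_single_of_lt]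

theorem aeval_companion_mulVec_of_natDegree_lt (hm : 1 ≤ m) {f : ℚ[X]} (hf : f.natDegree < m) :
    aeval (companion m p) f *ᵥ Pi.single ⟨0, hm⟩ 1 = fun i : Fin m => f.coeff i := by
  rw [aeval_mulVec_eq_sum, sum_over_range' _ (by simp) m hf, ← Fin.sum_univ_eq_sum_range
    (fun j => f.coeff j • (companion m p ^ j *ᵥ Pi.single ⟨0, hm⟩ 1))]
  simp_rw [companion_pow_mulVec_single_zero_s4 hm (Fin.is_lt _), ← Pi.single_smul, smul_eq_mul,
    mul_one]
  exact Finset.univ_sum_single _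

theorem aeval_companion_mulVec_sum_C_mul_X_pow (hm : 1 ≤ m) (z : Fin m → ℤ) :
    aeval (companion m p) (∑ i : Fin m, C (z i) * X ^ (i : ℕ)) *ᵥ Pi.single ⟨0, hm⟩ 1 =
      fun i => (z i : ℚ) := by
  simp only [map_sum, sum_mulVec, map_mul, eq_intCast, map_intCast, map_pow, aeval_X,
    ← mulVec_mulVec, companion_pow_mulVec_single_zero_s4 hm (Fin.is_lt _), intCast_mulVec,
    ← Pi.single_smul, smul_eq_mul, mul_one]
  exact Finset.univ_sum_single _

theorem exists_aeval_companion_mulVec_eq_of_mem_intSpan (hm : 1 ≤ m) {v : Fin m → ℚ}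
    (hv : v ∈ intSpan m (companion m p)) :
    ∃ f : ℤ[X], aeval (companion m p) f *ᵥ Pi.single ⟨0, hm⟩ 1 = v := by
  let ψ : ℤ[X] →+ (Fin m → ℚ) :=
    { toFun := fun f => aeval (companion m p) f *ᵥ Pi.single ⟨0, hm⟩ 1
      map_zero' := by rw [map_zero, zero_mulVec]
      map_add' := fun f g => by rw [map_add, add_mulVec] }
  suffices intSpan m (companion m p) ≤ ψ.range from this hv
  refine (AddSubgroup.closure_le _).mpr ?_
  rintro _ ⟨j, z, rfl⟩
  refine ⟨X ^ j * ∑ i : Fin m, C (z i) * X ^ (i : ℕ), ?_⟩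
  simp only [ψ, AddMonoidHom.coe_mk, ZeroHom.coe_mk]
  rw [map_mul, ← mulVec_mulVec, aeval_companion_mulVec_sum_C_mul_X_pow, map_pow, aeval_X]

theorem aeval_companion_self_mulVec (hm : 1 ≤ m) (hp : p.Monic) (hpm : p.natDegree = m) :
    aeval (companion m p) p *ᵥ Pi.single ⟨0, hm⟩ 1 = 0 := by
  have hlow : (p - X ^ m).natDegree < m :=
    IsMonicOfDegree.natDegree_sub_X_pow (by omega) ⟨hpm, hp⟩
  have hX : aeval (companion m p) (X ^ m : ℚ[X]) *ᵥ Pi.single ⟨0, hm⟩ 1 =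
      -fun k : Fin m => p.coeff k := by
    obtain ⟨n, rfl⟩ : ∃ n, m = n + 1 := ⟨m - 1, by omega⟩
    rw [map_pow, aeval_X, pow_succ', ← mulVec_mulVec,
      companion_pow_mulVec_single_zero_s4 hm (Nat.lt_succ_self n),
      companion_mulVec_single_of_eq _ rfl]
  have hsplit : aeval (companion m p) p =
      aeval (companion m p) (X ^ m : ℚ[X]) + aeval (companion m p) (p - X ^ m) := by
    rw [← map_add, add_sub_cancel]
  rw [hsplit, add_mulVec, hX, aeval_companion_mulVec_of_natDegree_lt hm hlow]
  ext k
  simp [coeff_X_pow, k.is_lt.ne]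

theorem aeval_companion_mul_self_mulVec (hm : 1 ≤ m) (hp : p.Monic) (hpm : p.natDegree = m)
    (g : ℚ[X]) : aeval (companion m p) (g * p) *ᵥ Pi.single ⟨0, hm⟩ 1 = 0 := by
  rw [map_mul, ← mulVec_mulVec, aeval_companion_self_mulVec hm hp hpm, mulVec_zero]

theorem aeval_companion_mulVec_eq_zero_iff (hm : 1 ≤ m) (hp : p.Monic) (hpm : p.natDegree = m)
    {f : ℚ[X]} : aeval (companion m p) f *ᵥ Pi.single ⟨0, hm⟩ 1 = 0 ↔ p ∣ f := by
  have hp1 : p ≠ 1 := fun h => by rw [h, natDegree_one] at hpm; omega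
  have hmod_lt := natDegree_modByMonic_lt f hp hp1
  have hmod : aeval (companion m p) f *ᵥ Pi.single ⟨0, hm⟩ 1 =
      fun i : Fin m => (f %ₘ p).coeff i := by
    conv_lhs => rw [← modByMonic_add_div f p, mul_comm]
    rw [map_add, add_mulVec, aeval_companion_mul_self_mulVec hm hp hpm, add_zero,
      aeval_companion_mulVec_of_natDegree_lt hm (hpm ▸ hmod_lt)]
  rw [hmod, ← modByMonic_eq_zero_iff_dvd hp]
  refine ⟨fun h => ?_, fun h => by ext; simp [h]⟩
  ext k
  by_cases hk : k < m
  · exact congrFun h ⟨k, hk⟩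
  · exact coeff_eq_zero_of_natDegree_lt (by omega)

theorem aeval_companion_mulVec_eq_zero_iff_dvd_of_isPrimitive (hm : 1 ≤ m) (hp : p.Monic)
    (hpm : p.natDegree = m) {q : ℤ[X]} (hq : q.IsPrimitive)
    (hpq : q.map (Int.castRingHom ℚ) = C (q.leadingCoeff : ℚ) * p) {f : ℤ[X]} :
    aeval (companion m p) f *ᵥ Pi.single ⟨0, hm⟩ 1 = 0 ↔ q ∣ f := by
  have hc : (q.leadingCoeff : ℚ) ≠ 0 := by exact_mod_cast leadingCoeff_ne_zero.mpr hq.ne_zero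
  rw [IsPrimitive.Int.dvd_iff_map_cast_dvd_map_cast _ _ hq, hpq, C_mul_dvd hc,
    ← aeval_companion_mulVec_eq_zero_iff hm hp hpm, ← algebraMap_int_eq, aeval_map_algebraMap]

end Companion

namespace Polynomial

def HasDigitCoeffs (m : ℕ) (c : ℤ) (g : ℤ[X]) : Prop :=
  ∀ j, m ≤ j → 0 ≤ g.coeff j ∧ g.coeff j < |c|

theorem eq_zero_of_dvd_of_abs_coeff_lt {q d : ℤ[X]} (hqd : q ∣ d)
    (hd : ∀ j, q.natDegree ≤ j → |d.coeff j| < |q.leadingCoeff|) : d = 0 := by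
  obtain ⟨g, rfl⟩ := hqd
  by_contra hne
  have hq0 : q ≠ 0 := left_ne_zero_of_mul hne
  have hg0 : g ≠ 0 := right_ne_zero_of_mul hne
  have hlead := hd (q * g).natDegree (by rw [natDegree_mul hq0 hg0]; omega)
  rw [coeff_natDegree, leadingCoeff_mul, abs_mul] at hlead
  have : 1 ≤ |g.leadingCoeff| := Int.one_le_abs (leadingCoeff_ne_zero.mpr hg0)
  nlinarith [abs_nonneg q.leadingCoeff]

theorem HasDigitCoeffs.eq_of_dvd_sub {q g g' : ℤ[X]}
    (hg : HasDigitCoeffs q.natDegree q.leadingCoeff g)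
    (hg' : HasDigitCoeffs q.natDegree q.leadingCoeff g') (hdvd : q ∣ g - g') : g = g' := by
  refine sub_eq_zero.mp (eq_zero_of_dvd_of_abs_coeff_lt hdvd fun j hj => ?_)
  have := hg j hj
  have := hg' j hj
  rw [coeff_sub, abs_lt]
  omega

theorem degree_sub_digit_lt {q f : ℤ[X]} {N : ℕ} (hN : q.natDegree ≤ N) (hf : f.degree < ↑(N + 1)) :
    (f - C (f.coeff N % q.leadingCoeff) * X ^ N
      - C (f.coeff N / q.leadingCoeff) * X ^ (N - q.natDegree) * q).degree < ↑N := by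
  rw [degree_lt_iff_coeff_zero] at hf ⊢
  intro k hk
  simp only [coeff_sub, mul_assoc, coeff_C_mul, coeff_X_pow, coeff_X_pow_mul']
  rcases hk.eq_or_lt with rfl | hlt
  · rw [if_pos rfl, if_pos (by omega), show N - (N - q.natDegree) = q.natDegree by omega,
      coeff_natDegree]
    have := Int.mul_ediv_add_emod (f.coeff N) q.leadingCoeff
    linarith
  · rw [hf k hlt, if_neg hlt.ne', if_pos (by omega),
      coeff_eq_zero_of_natDegree_lt (p := q) (by omega)]
    ring

theorem exists_hasDigitCoeffs_dvd_sub_of_degree_lt {q : ℤ[X]} (hq : q ≠ 0) {N : ℕ}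
    (hN : q.natDegree ≤ N) {f : ℤ[X]} (hf : f.degree < N) :
    ∃ g : ℤ[X], g.degree < N ∧ HasDigitCoeffs q.natDegree q.leadingCoeff g ∧ q ∣ f - g := by
  induction N, hN using Nat.le_induction generalizing f with
  | base =>
    refine ⟨f, hf, fun j hj => ?_, by simp⟩
    rw [(degree_lt_iff_coeff_zero f _).mp hf j hj]
    exact ⟨le_rfl, abs_pos.mpr (leadingCoeff_ne_zero.mpr hq)⟩
  | succ N hN ih =>
    have hc : q.leadingCoeff ≠ 0 := leadingCoeff_ne_zero.mpr hq
    set r := f.coeff N % q.leadingCoeff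
    set t := f.coeff N / q.leadingCoeff
    obtain ⟨g, hgN, hg, hdvd⟩ := ih (degree_sub_digit_lt hN hf)
    have hg_top := (degree_lt_iff_coeff_zero g N).mp hgN
    refine ⟨g + C r * X ^ N, ?_, fun j hj => ?_, ?_⟩
    · rw [degree_lt_iff_coeff_zero]
      intro k hk
      rw [coeff_add, coeff_C_mul_X_pow, if_neg (by omega), hg_top k (by omega), add_zero]
    · rw [coeff_add, coeff_C_mul_X_pow]
      split_ifs with hjN
      · rw [hjN, hg_top N le_rfl, zero_add]
        exact ⟨Int.emod_nonneg _ hc, Int.emod_lt_abs _ hc⟩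
      · rw [add_zero]
        exact hg j hj
    · have hsplit : f - (g + C r * X ^ N) = (f - C r * X ^ N - C t * X ^ (N - q.natDegree) * q - g)
          + C t * X ^ (N - q.natDegree) * q := by ring
      rw [hsplit]
      exact dvd_add hdvd (dvd_mul_left _ _)

theorem exists_hasDigitCoeffs_dvd_sub {q : ℤ[X]} (hq : q ≠ 0) (f : ℤ[X]) :
    ∃ g : ℤ[X], HasDigitCoeffs q.natDegree q.leadingCoeff g ∧ q ∣ f - g := by
  have hf : f.degree < ↑(max q.natDegree (f.natDegree + 1)) :=
    (degree_le_natDegree).trans_lt (by exact_mod_cast (by omega : f.natDegree < _))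
  obtain ⟨g, -, hg, hdvd⟩ := exists_hasDigitCoeffs_dvd_sub_of_degree_lt hq (le_max_left _ _) hf
  exact ⟨g, hg, hdvd⟩

end Polynomial

theorem existsUnique_hasDigitCoeffs_aeval_companion_mulVec_eq {m : ℕ} (hm : 1 ≤ m) {q : ℤ[X]}
    (hqd : q.natDegree = m) (hq : q.IsPrimitive) {p : ℚ[X]} (hp : p.Monic)
    (hpq : q.map (Int.castRingHom ℚ) = C (q.leadingCoeff : ℚ) * p) {v : Fin m → ℚ}
    (hv : v ∈ intSpan m (companion m p)) :
    ∃! g : ℤ[X], HasDigitCoeffs m q.leadingCoeff g ∧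
      aeval (companion m p) g *ᵥ Pi.single ⟨0, hm⟩ 1 = v := by
  have hpm : p.natDegree = m := by
    have hc : (q.leadingCoeff : ℚ) ≠ 0 := by exact_mod_cast leadingCoeff_ne_zero.mpr hq.ne_zero
    rw [← hqd, ← natDegree_map_eq_of_injective (Int.castRingHom ℚ).injective_int q, hpq,
      natDegree_C_mul hc]
  have hker {f : ℤ[X]} :=
    aeval_companion_mulVec_eq_zero_iff_dvd_of_isPrimitive hm hp hpm hq hpq (f := f)
  obtain ⟨f, rfl⟩ := exists_aeval_companion_mulVec_eq_of_mem_intSpan hm hv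
  obtain ⟨g, hg, hdvd⟩ := exists_hasDigitCoeffs_dvd_sub hq.ne_zero f
  subst hqd
  have hgf : aeval (companion q.natDegree p) g *ᵥ Pi.single ⟨0, hm⟩ 1 =
      aeval (companion q.natDegree p) f *ᵥ Pi.single ⟨0, hm⟩ 1 := by
    rw [← sub_eq_zero, ← sub_mulVec, ← map_sub, hker.mpr (dvd_sub_comm.mp hdvd)]
  refine ⟨g, ⟨hg, hgf⟩, fun g' ⟨hg', hg'f⟩ => hg'.eq_of_dvd_sub hg (hker.mp ?_)⟩
  rw [map_sub, sub_mulVec, hg'f, hgf, sub_self]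

theorem stmt4 (m : ℕ) (hm : 1 ≤ m)
    (q : Polynomial ℤ) (hqd : q.natDegree = m) (hq : q.IsPrimitive)
    (p : Polynomial ℚ) (hp : p.Monic)
    (hpq : q.map (Int.castRingHom ℚ) = Polynomial.C ((q.leadingCoeff : ℚ)) * p)
    (v : Fin m → ℚ) (hv : v ∈ intSpan m (companion m p)) :
    ∃! b : ℕ →₀ ℤ,
      (∀ j, m ≤ j → 0 ≤ b j ∧ b j < |q.leadingCoeff|) ∧
      v = b.sum fun j bj =>
            (bj : ℚ) • ((companion m p ^ j) *ᵥ Pi.single (⟨0, hm⟩ : Fin m) (1 : ℚ)) := by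
  let e : (ℕ →₀ ℤ) ≃ ℤ[X] := AddMonoidAlgebra.coeffEquiv.symm.trans (toFinsuppIso ℤ).symm.toEquiv
  refine (e.existsUnique_congr fun b => ?_).mpr
    (existsUnique_hasDigitCoeffs_aeval_companion_mulVec_eq hm hqd hq hp hpq hv)
  rw [show e b = ⟨.ofCoeff b⟩ from rfl, aeval_ofFinsupp_mulVec, eq_comm (a := v)]
  rfl
end
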